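/- Let h_k ∈ ℂ^N be the actual channel of user k, p_c ∈ ℂ^N the precoder of the common stream, and p_1, …, p_K ∈ ℂ^N the private precoders. Define the interference-plus-noise power I_{c,k} = ∑_{j=1}^{K} |h_k^H p_j|² + 1 and the common-stream rate R_{c,k} = ln(1 + |h_k^H p_c|²/I_{c,k}). Then the weighted minimum mean square error of the common stream at user k, namely the infimum over w > 0 and g ∈ ℂ of w·(|g|²·(I_{c,k} + |h_k^H p_c|²) − 2·Re(g·(h_k^H p_c)) + 1) − ln w, equals 1 − R_{c,k}, and this infimum is attained (at g* = conj(h_k^H p_c)/(I_{c,k} + |h_k^H p_c|²) and w* = (I_{c,k} + |h_k^H p_c|²)/I_{c,k}). -/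

import Mathlib

/-!
Completing the square in `g` gives `mse T a g = T ‖g - conj a / T‖² + I / T` with
`T = I + |a|²`, so the inner minimum over the receiver is `I / T`, attained at
`g = conj a / T`. The outer minimum of `w c - ln w` over `w > 0` is `1 + ln c`, attained at
`w = 1 / c` (this is `ln x ≤ x - 1`); with `c = I / T` it equals `1 - ln (1 + |a|² / I)`.
-/

open Real ComplexConjugate

noncomputable def mse (T : ℝ) (a g : ℂ) : ℝ := ‖g‖ ^ 2 * T - 2 * (g * a).re + 1

lemma one_sub_div_le_mse {T : ℝ} (hT : 0 < T) (a g : ℂ) :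
    1 - ‖a‖ ^ 2 / T ≤ mse T a g := by
  rw [mse, Complex.sq_norm, Complex.sq_norm, Complex.normSq_apply, Complex.normSq_apply,
    Complex.mul_re, sub_le_comm, le_div_iff₀ hT]
  nlinarith [sq_nonneg (g.re * T - a.re), sq_nonneg (g.im * T + a.im)]

lemma mse_conj_div {T : ℝ} (hT : T ≠ 0) (a : ℂ) :
    mse T a (conj a / (T : ℂ)) = 1 - ‖a‖ ^ 2 / T := by
  have hnorm : ‖conj a / (T : ℂ)‖ ^ 2 = ‖a‖ ^ 2 / T ^ 2 := by
    rw [norm_div, div_pow, RCLike.norm_conj, Complex.norm_real, Real.norm_eq_abs, sq_abs]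
  have hre : (conj a / (T : ℂ) * a).re = ‖a‖ ^ 2 / T := by
    rw [div_mul_eq_mul_div, Complex.conj_mul', ← Complex.ofReal_pow, ← Complex.ofReal_div,
      Complex.ofReal_re]
  rw [mse, hnorm, hre]
  field_simp
  ring

lemma one_add_log_le_mul_sub_log {c w : ℝ} (hc : 0 < c) (hw : 0 < w) :
    1 + log c ≤ w * c - log w := by
  have := log_le_sub_one_of_pos (mul_pos hw hc)
  rw [log_mul hw.ne' hc.ne'] at this
  linarith

lemma wmse_at_optimum {I : ℝ} (hI : 0 < I) (a : ℂ) :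
    (I + ‖a‖ ^ 2) / I * mse (I + ‖a‖ ^ 2) a (conj a / ((I + ‖a‖ ^ 2 : ℝ) : ℂ))
      - log ((I + ‖a‖ ^ 2) / I) = 1 - log (1 + ‖a‖ ^ 2 / I) := by
  have hT : 0 < I + ‖a‖ ^ 2 := by positivity
  rw [mse_conj_div hT.ne', one_add_div hI.ne']
  field_simp
  ring

lemma isLeast_wmse {I : ℝ} (hI : 0 < I) (a : ℂ) :
    IsLeast {y : ℝ | ∃ w : ℝ, ∃ g : ℂ, 0 < w ∧ y = w * mse (I + ‖a‖ ^ 2) a g - log w}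
      (1 - log (1 + ‖a‖ ^ 2 / I)) := by
  have hT : 0 < I + ‖a‖ ^ 2 := by positivity
  refine ⟨⟨_, _, div_pos hT hI, (wmse_at_optimum hI a).symm⟩, ?_⟩
  rintro y ⟨w, g, hw, rfl⟩
  have hmse : I / (I + ‖a‖ ^ 2) ≤ mse (I + ‖a‖ ^ 2) a g := by
    have := one_sub_div_le_mse hT a g
    rwa [one_sub_div hT.ne', add_sub_cancel_right] at this
  have hlog : 1 - log (1 + ‖a‖ ^ 2 / I) = 1 + log (I / (I + ‖a‖ ^ 2)) := by
    rw [one_add_div hI.ne', ← inv_div, log_inv, sub_neg_eq_add]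
  calc 1 - log (1 + ‖a‖ ^ 2 / I)
      ≤ w * (I / (I + ‖a‖ ^ 2)) - log w :=
        hlog ▸ one_add_log_le_mul_sub_log (div_pos hI hT) hw
    _ ≤ w * mse (I + ‖a‖ ^ 2) a g - log w := by gcongr

theorem common_stream_rate_wmmse_general
    (N K : ℕ)
    (h : Fin K → Fin N → ℂ) (p : Fin K → Fin N → ℂ) (k : Fin K)
    (a : ℂ)
    (Ick : ℝ)
    (hIck : Ick = (∑ j, ‖∑ n, starRingEnd ℂ (h k n) * p j n‖ ^ 2) + 1)
    (Rck : ℝ) (hRck : Rck = Real.log (1 + ‖a‖ ^ 2 / Ick)) :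
    IsLeast {y : ℝ | ∃ w : ℝ, ∃ g : ℂ, 0 < w ∧
        y = w * (‖g‖ ^ 2 * (Ick + ‖a‖ ^ 2) - 2 * (g * a).re + 1) - Real.log w}
      (1 - Rck) ∧
    ((Ick + ‖a‖ ^ 2) / Ick) *
        (‖starRingEnd ℂ a / ((Ick + ‖a‖ ^ 2 : ℝ) : ℂ)‖ ^ 2 * (Ick + ‖a‖ ^ 2)
          - 2 * ((starRingEnd ℂ a / ((Ick + ‖a‖ ^ 2 : ℝ) : ℂ)) * a).re + 1)
      - Real.log ((Ick + ‖a‖ ^ 2) / Ick) = 1 - Rck := by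
  have hIpos : 0 < Ick := by
    rw [hIck]
    positivity
  subst hRck
  exact ⟨isLeast_wmse hIpos a, wmse_at_optimum hIpos a⟩

/-- Rate–WMMSE relationship for the common stream at user `k`
in rate-splitting. With actual channel `h k`, common precoder `pc`, private
precoders `p 1, …, p K`, interference-plus-noise power
`I_{c,k} = ∑_{j=1}^K |h_kᴴ p_j|² + 1` and common-stream rate
`R_{c,k} = ln(1 + |h_kᴴ p_c|²/I_{c,k})`, the infimum over `w > 0`, `g ∈ ℂ` of
`w(|g|²(I_{c,k} + |a|²) − 2 Re(g a) + 1) − ln w` (where `a = h_kᴴ p_c`) equals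
`1 − R_{c,k}` and is attained at `g* = conj(a)/(I_{c,k} + |a|²)`,
`w* = (I_{c,k} + |a|²)/I_{c,k}`. -/
theorem common_stream_rate_wmmse
    (N K : ℕ) (hN : 1 ≤ N) (hK : 1 ≤ K)
    (h : Fin K → Fin N → ℂ) (pc : Fin N → ℂ) (p : Fin K → Fin N → ℂ) (k : Fin K)
    (a : ℂ) (ha : a = ∑ n, starRingEnd ℂ (h k n) * pc n)
    (Ick : ℝ)
    (hIck : Ick = (∑ j, ‖∑ n, starRingEnd ℂ (h k n) * p j n‖ ^ 2) + 1)
    (Rck : ℝ) (hRck : Rck = Real.log (1 + ‖a‖ ^ 2 / Ick)) :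
    IsLeast {y : ℝ | ∃ w : ℝ, ∃ g : ℂ, 0 < w ∧
        y = w * (‖g‖ ^ 2 * (Ick + ‖a‖ ^ 2) - 2 * (g * a).re + 1) - Real.log w}
      (1 - Rck) ∧
    ((Ick + ‖a‖ ^ 2) / Ick) *
        (‖starRingEnd ℂ a / ((Ick + ‖a‖ ^ 2 : ℝ) : ℂ)‖ ^ 2 * (Ick + ‖a‖ ^ 2)
          - 2 * ((starRingEnd ℂ a / ((Ick + ‖a‖ ^ 2 : ℝ) : ℂ)) * a).re + 1)
      - Real.log ((Ick + ‖a‖ ^ 2) / Ick) = 1 - Rck :=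
  common_stream_rate_wmmse_general N K h p k a Ick hIck Rck hRck
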